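/- Let h₀, h₁ : T^m → T^m be translations of the m-torus T^m = ℝ^m/ℤ^m. If there exists a homeomorphism f : T^m → T^m isotopic to the identity such that f ∘ h₀ ∘ f⁻¹ = h₁, then h₀ = h₁. -/
import Mathlib

open AddCircle Set Finset

local notation "𝕊" => AddCircle (1:ℝ)

noncomputable def sd : 𝕊 → ℝ := fun z => (AddCircle.equivIoc (1:ℝ) (-(2⁻¹)) z : ℝ)

lemma sd_coe (z : 𝕊) : ((sd z : ℝ) : 𝕊) = z :=
  (AddCircle.equivIoc (1:ℝ) (-(2⁻¹))).symm_apply_apply z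

lemma sd_continuousAt {z : 𝕊} (hz : ‖z‖ < 4⁻¹) : ContinuousAt sd z := by
  have hbad : z ≠ (((-(2⁻¹) : ℝ)) : 𝕊) := by
    intro h
    rw [h, AddCircle.norm_eq] at hz
    norm_num [round_eq] at hz
  exact continuous_subtype_val.continuousAt.comp
    (AddCircle.continuousAt_equivIoc (1:ℝ) (-(2⁻¹)) hbad)

lemma exists_lift {Y : Type*} [MetricSpace Y] [CompactSpace Y]
    (G : C(Y × unitInterval, 𝕊)) :
    ∃ u : Y → ℝ, Continuous u ∧ ∀ y, ((u y : ℝ) : 𝕊) = G (y, 1) - G (y, 0) := by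
  have hUC : UniformContinuous G := CompactSpace.uniformContinuous_of_continuous G.continuous
  rw [Metric.uniformContinuous_iff] at hUC
  obtain ⟨δ, hδ, hδ'⟩ := hUC 4⁻¹ (by norm_num)
  obtain ⟨N, hN⟩ := exists_nat_one_div_lt hδ
  have hN0 : (0:ℝ) < (N:ℝ) + 1 := by positivity
  set τ : ℕ → unitInterval := fun k => ⟨min ((k:ℝ)/((N:ℝ)+1)) 1, by
    constructor
    · exact le_min (by positivity) zero_le_one
    · exact min_le_right _ _⟩ with hτ
  have hτ0 : τ 0 = 0 := by
    ext; simp [hτ]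
  have hτM : τ (N+1) = 1 := by
    ext
    simp only [hτ]
    push_cast
    rw [div_self hN0.ne']
    simp
  have hτdist : ∀ k, dist (τ (k+1)) (τ k) < δ := by
    intro k
    have hmono : (k:ℝ)/((N:ℝ)+1) ≤ ((k:ℝ)+1)/((N:ℝ)+1) := by gcongr; linarith
    rw [Subtype.dist_eq, Real.dist_eq, abs_of_nonneg]
    · have h2 : min (((k:ℝ)+1)/((N:ℝ)+1)) 1 ≤ min ((k:ℝ)/((N:ℝ)+1)) 1 + 1/((N:ℝ)+1) := by
        rcases le_or_gt 1 ((k:ℝ)/((N:ℝ)+1)) with h | h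
        · rw [min_eq_right h]
          refine (min_le_right _ _).trans ?_
          have : (0:ℝ) < 1/((N:ℝ)+1) := by positivity
          linarith
        · rw [min_eq_left h.le]
          refine (min_le_left _ _).trans ?_
          rw [add_div]
      simp only [hτ]
      push_cast
      linarith
    · simp only [hτ]
      push_cast
      apply sub_nonneg.mpr
      exact min_le_min hmono le_rfl
  have hsmall : ∀ (y : Y) (k : ℕ), ‖G (y, τ (k+1)) - G (y, τ k)‖ < 4⁻¹ := by
    intro y k
    have := hδ' (a := (y, τ (k+1))) (b := (y, τ k)) (by
      rw [Prod.dist_eq]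
      simp only [dist_self]
      exact max_lt hδ (hτdist k))
    rwa [dist_eq_norm] at this
  refine ⟨fun y => ∑ k ∈ Finset.range (N+1), sd (G (y, τ (k+1)) - G (y, τ k)), ?_, ?_⟩
  · apply continuous_finset_sum
    intro k _
    have hcont : Continuous fun y : Y => G (y, τ (k+1)) - G (y, τ k) := by
      exact ((G.continuous.comp (continuous_id.prodMk continuous_const)).sub
        (G.continuous.comp (continuous_id.prodMk continuous_const)))
    rw [continuous_iff_continuousAt]
    intro y
    exact ContinuousAt.comp (g := sd) (sd_continuousAt (hsmall y k)) hcont.continuousAt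
  · intro y
    have : ((((∑ k ∈ Finset.range (N+1), sd (G (y, τ (k+1)) - G (y, τ k))) : ℝ)) : 𝕊)
        = ∑ k ∈ Finset.range (N+1), ((sd (G (y, τ (k+1)) - G (y, τ k)) : ℝ) : 𝕊) :=
      map_sum (QuotientAddGroup.mk' _) _ _
    rw [this]
    simp only [sd_coe]
    rw [Finset.sum_range_sub (fun k => G (y, τ k)), hτ0, hτM]

lemma coe_sub' (x y : ℝ) : ((x - y : ℝ) : 𝕊) = (x:𝕊) - (y:𝕊) :=
  map_sub (QuotientAddGroup.mk' (AddSubgroup.zmultiples (1:ℝ))) x y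

lemma coe_add' (x y : ℝ) : ((x + y : ℝ) : 𝕊) = (x:𝕊) + (y:𝕊) :=
  map_add (QuotientAddGroup.mk' (AddSubgroup.zmultiples (1:ℝ))) x y

lemma half_ne_zero' : (((2⁻¹ : ℝ)) : 𝕊) ≠ 0 := by
  intro h
  rw [AddCircle.coe_eq_zero_iff] at h
  obtain ⟨n, hn⟩ := h
  have h2 : ((n : ℝ)) = 2⁻¹ := by
    rw [← hn]; simp
  have : (2 * n : ℤ) = 1 := by
    exact_mod_cast (by linarith : (2:ℝ) * n = 1)
  omega


/-- If two translations `x ↦ x + v₀` and `x ↦ x + v₁` of the m-torus `ℝ^m/ℤ^m` are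
conjugate by a homeomorphism isotopic to the identity, then they are equal. -/
theorem stmt_1 (m : ℕ) (v₀ v₁ : Fin m → AddCircle (1 : ℝ))
    (f : Homeomorph (Fin m → AddCircle (1 : ℝ)) (Fin m → AddCircle (1 : ℝ)))
    (hiso : ∃ F : C((Fin m → AddCircle (1 : ℝ)) × unitInterval, Fin m → AddCircle (1 : ℝ)),
      (∀ x, F (x, 0) = x) ∧ (∀ x, F (x, 1) = f x) ∧
      ∀ t : unitInterval,
        ∃ g : Homeomorph (Fin m → AddCircle (1 : ℝ)) (Fin m → AddCircle (1 : ℝ)),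
          ∀ x, F (x, t) = g x)
    (hconj : ∀ x, f (x + v₀) = f x + v₁) :
    v₀ = v₁ := by
  obtain ⟨F, hF0, hF1, -⟩ := hiso
  funext i
  -- the coordinate displacement homotopy
  have hGc : Continuous fun p : (Fin m → 𝕊) × unitInterval => F p i - p.1 i := by
    exact ((continuous_apply i).comp F.continuous).sub ((continuous_apply i).comp continuous_fst)
  obtain ⟨u, hu, hπ⟩ := exists_lift ⟨fun p => F p i - p.1 i, hGc⟩
  have hπ' : ∀ x, ((u x : ℝ) : 𝕊) = f x i - x i := by
    intro x
    have := hπ x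
    simp only [ContinuousMap.coe_mk] at this
    rw [this, hF0, hF1]
    abel
  set w : (Fin m → 𝕊) → ℝ := fun x => u (x + v₀) - u x with hwdef
  have hw : ∀ x, ((w x : ℝ) : 𝕊) = v₁ i - v₀ i := by
    intro x
    have h1 : ((w x : ℝ) : 𝕊) = ((u (x + v₀) : ℝ) : 𝕊) - ((u x : ℝ) : 𝕊) := by
      simp [hwdef]
    rw [h1, hπ', hπ', hconj x]
    simp only [Pi.add_apply]
    abel
  have hwc : Continuous w := (hu.comp (continuous_id.add continuous_const)).sub hu
  -- w is constant
  have hall : ∀ x y, w x = w y := by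
    intro x y
    by_contra hne
    wlog hlt : w x < w y generalizing x y
    · exact this y x (Ne.symm hne) (lt_of_le_of_ne (not_lt.mp hlt) (Ne.symm hne))
    have hrange : IsPreconnected (Set.range w) := (isConnected_range hwc).isPreconnected
    have hord := hrange.ordConnected
    have hmem : w x + 2⁻¹ ∈ Set.range w := by
      apply hord.out ⟨x, rfl⟩ ⟨y, rfl⟩
      constructor
      · linarith
      · -- w y - w x is a nonzero integer, hence ≥ 1
        have hz : (((w y - w x : ℝ)) : 𝕊) = 0 := by
          rw [coe_sub', hw, hw, sub_self]
        rw [AddCircle.coe_eq_zero_iff] at hz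
        obtain ⟨n, hn⟩ := hz
        have hn' : (n : ℝ) = w y - w x := by rw [← hn]; simp
        have hnpos : 0 < n := by exact_mod_cast (by linarith : (0:ℝ) < (n:ℝ))
        have hge : (1:ℝ) ≤ w y - w x := by
          rw [← hn']
          exact_mod_cast hnpos
        simp only [hwdef] at hge ⊢
        linarith
    obtain ⟨z, hz⟩ := hmem
    have : ((w z : ℝ) : 𝕊) = v₁ i - v₀ i + ((2⁻¹ : ℝ) : 𝕊) := by
      rw [hz, coe_add', hw]
    rw [hw z] at this
    exact half_ne_zero' (by linear_combination (norm := abel) this.symm)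
  set W : ℝ := w 0 with hW
  have hstep : ∀ x, u (x + v₀) = u x + W := by
    intro x
    have h := hall x 0
    have hW' : W = u (0 + v₀) - u 0 := rfl
    have hx' : w x = u (x + v₀) - u x := rfl
    rw [hx'] at h
    have : w 0 = u (0 + v₀) - u 0 := rfl
    rw [this] at h
    linarith [h]
  have hiter : ∀ n : ℕ, u (n • v₀) = u 0 + n * W := by
    intro n
    induction n with
    | zero => simp
    | succ k ih =>
      rw [succ_nsmul, hstep, ih]
      push_cast
      ring
  -- boundedness
  obtain ⟨x₀, -, hmax⟩ := isCompact_univ.exists_isMaxOn (Set.univ_nonempty)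
    (hu.norm.continuousOn)
  have hbd : ∀ x, |u x| ≤ |u x₀| := fun x => hmax (Set.mem_univ x)
  have hW0 : W = 0 := by
    by_contra hW0
    have hWpos : 0 < |W| := abs_pos.mpr hW0
    obtain ⟨n, hn⟩ := exists_nat_gt ((|u x₀| + |u 0|) / |W|)
    have h1 : |u 0 + (n:ℝ) * W| ≤ |u x₀| := by
      have := hbd (n • v₀)
      rwa [hiter n] at this
    have h3 : |(n:ℝ) * W| - |u 0 + (n:ℝ) * W| ≤ |u 0| := by
      have h4 := abs_sub_abs_le_abs_sub ((n:ℝ) * W) (u 0 + (n:ℝ) * W)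
      have h5 : (n:ℝ) * W - (u 0 + (n:ℝ) * W) = -(u 0) := by ring
      rw [h5, abs_neg] at h4
      exact h4
    rw [abs_mul, abs_of_nonneg (by positivity : (0:ℝ) ≤ (n:ℝ))] at h3
    rw [div_lt_iff₀ hWpos] at hn
    linarith
  have := hw 0
  rw [← hW, hW0] at this
  simp only [QuotientAddGroup.mk_zero] at this
  have := sub_eq_zero.mp this.symm
  exact this.symm
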